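/- arXiv:0905.0940 — 4 statements merged into one kernel-verified Lean document; each statement's English description precedes it below -/
import Mathlib

section
/- Under the same setup, any minimizer Q* of D(Q||P) over the set {Q : I(Q_e') ≥ I(Q_e)} must satisfy the equality I(Q*_e') = I(Q*_e), assuming I(P_e) > I(P_e'). -/
open Real Filter Set

namespace Stmt7Aux

lemma mul_log_div_eq {x c : ℝ} (hx : 0 ≤ x) (hc : c ≠ 0) :
    x * Real.log (x / c) = x * Real.log x - x * Real.log c := by
  rcases eq_or_lt_of_le hx with h | h
  · simp [← h]
  · rw [Real.log_div h.ne' hc]; ring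

lemma convex_step {q p δ : ℝ} (hq : 0 ≤ q) (hp : 0 < p) (h0 : 0 ≤ δ) (h1 : δ ≤ 1) :
    ((1-δ)*q + δ*p) * Real.log (((1-δ)*q + δ*p) / p)
      ≤ (1-δ) * (q * Real.log (q / p)) := by
  have h1' : (0:ℝ) ≤ 1 - δ := by linarith
  have hL : 0 ≤ (1-δ)*q + δ*p := add_nonneg (mul_nonneg h1' hq) (mul_nonneg h0 hp.le)
  have hconv := Real.convexOn_mul_log.2 (Set.mem_Ici.mpr hq) (Set.mem_Ici.mpr hp.le)
      h1' h0 (by ring)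
  simp only [smul_eq_mul] at hconv
  rw [mul_log_div_eq hL hp.ne', mul_log_div_eq hq hp.ne']
  nlinarith [hconv]

lemma term_ge {q p : ℝ} (hq : 0 ≤ q) (hp : 0 < p) :
    q - p ≤ q * Real.log (q / p) := by
  rcases eq_or_lt_of_le hq with h | hq'
  · simp [← h]; linarith
  · have h := Real.log_le_sub_one_of_pos (div_pos hp hq')
    rw [Real.log_div hp.ne' hq'.ne'] at h
    rw [mul_log_div_eq hq'.le hp.ne']
    have h2 : q * (Real.log p - Real.log q) ≤ q * (p / q - 1) :=
      mul_le_mul_of_nonneg_left h hq'.le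
    have h3 : q * (p / q - 1) = p - q := by field_simp
    nlinarith [h2]

lemma term_gt {q p : ℝ} (hq : 0 ≤ q) (hp : 0 < p) (hne : q ≠ p) :
    q - p < q * Real.log (q / p) := by
  rcases eq_or_lt_of_le hq with h | hq'
  · simp [← h]; linarith
  · have h := Real.log_lt_sub_one_of_pos (div_pos hp hq')
      (by intro hh; exact hne (by field_simp at hh; linarith))
    rw [Real.log_div hp.ne' hq'.ne'] at h
    rw [mul_log_div_eq hq'.le hp.ne']
    have h2 : q * (Real.log p - Real.log q) < q * (p / q - 1) :=
      (mul_lt_mul_iff_right₀ hq').mpr h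
    have h3 : q * (p / q - 1) = p - q := by field_simp
    nlinarith [h2]

lemma gibbs_pos {ι : Type*} [Fintype ι] {Q P : ι → ℝ} (hQ : ∀ i, 0 ≤ Q i)
    (hP : ∀ i, 0 < P i) (hQs : ∑ i, Q i = 1) (hPs : ∑ i, P i = 1) (hne : Q ≠ P) :
    0 < ∑ i, Q i * Real.log (Q i / P i) := by
  obtain ⟨j, hj⟩ : ∃ j, Q j ≠ P j := by
    by_contra h; push_neg at h; exact hne (funext h)
  have hsum : ∑ i, (Q i - P i) < ∑ i, Q i * Real.log (Q i / P i) :=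
    Finset.sum_lt_sum (fun i _ => term_ge (hQ i) (hP i))
      ⟨j, Finset.mem_univ j, term_gt (hQ j) (hP j) hj⟩
  rwa [Finset.sum_sub_distrib, hQs, hPs, sub_self] at hsum

lemma lin_tendsto (a b : ℝ) :
    Tendsto (fun δ : ℝ => (1-δ)*a + δ*b) (nhds 0) (nhds a) := by
  have h : Continuous fun δ : ℝ => (1-δ)*a + δ*b := by continuity
  simpa using h.tendsto 0

lemma self_tendsto (a b : ℝ) :
    Tendsto (fun δ : ℝ => ((1-δ)*a + δ*b) * Real.log ((1-δ)*a + δ*b)) (nhds 0)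
      (nhds (a * Real.log a)) := by
  have h : Continuous fun δ : ℝ => ((1-δ)*a + δ*b) * Real.log ((1-δ)*a + δ*b) :=
    Real.continuous_mul_log.comp (by continuity)
  simpa using h.tendsto 0

lemma cross_tendsto (a b c d : ℝ) (hd : 0 < d) (hc : 0 ≤ c)
    (hac : 0 < c ∨ a = 0) :
    Tendsto (fun δ : ℝ => ((1-δ)*a + δ*b) * Real.log ((1-δ)*c + δ*d)) (nhds 0)
      (nhds (a * Real.log c)) := by
  by_cases hcpos : 0 < c
  · have h2 : Tendsto (fun δ : ℝ => Real.log ((1-δ)*c + δ*d)) (nhds 0)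
        (nhds (Real.log c)) :=
      ((Real.continuousAt_log hcpos.ne').tendsto).comp (lin_tendsto c d)
    exact (lin_tendsto a b).mul h2
  · have hc0 : c = 0 := le_antisymm (not_lt.mp hcpos) hc
    have ha0 : a = 0 := hac.resolve_left hcpos
    subst hc0; subst ha0
    have heq : (fun δ : ℝ => ((1-δ)*0 + δ*b) * Real.log ((1-δ)*0 + δ*d))
        = fun δ : ℝ => (b/d) * ((δ*d) * Real.log (δ*d)) := by
      funext δ; field_simp; ring
    rw [heq]
    have h : Continuous fun δ : ℝ => (b/d) * ((δ*d) * Real.log (δ*d)) :=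
      continuous_const.mul (Real.continuous_mul_log.comp (by continuity))
    simpa using h.tendsto 0

lemma term_tendsto (a b c d e f : ℝ) (ha : 0 ≤ a) (hb : 0 < b) (hc : 0 ≤ c) (hd : 0 < d)
    (he : 0 ≤ e) (hf : 0 < f) (hac : a ≤ c) (hae : a ≤ e) :
    Tendsto (fun δ : ℝ => ((1-δ)*a + δ*b) *
        Real.log (((1-δ)*a + δ*b) / (((1-δ)*c + δ*d) * ((1-δ)*e + δ*f))))
      (nhdsWithin 0 (Set.Ioi 0)) (nhds (a * Real.log (a / (c * e)))) := by
  have hacc : 0 < c ∨ a = 0 := by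
    rcases eq_or_lt_of_le ha with h | h
    · exact Or.inr h.symm
    · exact Or.inl (lt_of_lt_of_le h hac)
  have haee : 0 < e ∨ a = 0 := by
    rcases eq_or_lt_of_le ha with h | h
    · exact Or.inr h.symm
    · exact Or.inl (lt_of_lt_of_le h hae)
  have hval : a * Real.log (a / (c * e))
      = a * Real.log a - a * Real.log c - a * Real.log e := by
    rcases eq_or_lt_of_le ha with h | h
    · simp [← h]
    · have hc' : 0 < c := lt_of_lt_of_le h hac
      have he' : 0 < e := lt_of_lt_of_le h hae
      rw [Real.log_div h.ne' (mul_pos hc' he').ne', Real.log_mul hc'.ne' he'.ne']; ring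
  rw [hval]
  have hmain : Tendsto (fun δ : ℝ =>
      ((1-δ)*a + δ*b) * Real.log ((1-δ)*a + δ*b)
      - ((1-δ)*a + δ*b) * Real.log ((1-δ)*c + δ*d)
      - ((1-δ)*a + δ*b) * Real.log ((1-δ)*e + δ*f))
      (nhdsWithin 0 (Set.Ioi 0))
      (nhds (a * Real.log a - a * Real.log c - a * Real.log e)) :=
    (((self_tendsto a b).sub (cross_tendsto a b c d hd hc hacc)).sub
      (cross_tendsto a b e f hf he haee)).mono_left nhdsWithin_le_nhds
  apply hmain.congr'
  have hIoo : Set.Ioo (0:ℝ) 1 ∈ nhdsWithin 0 (Set.Ioi 0) :=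
    Ioo_mem_nhdsGT_of_mem ⟨le_refl 0, zero_lt_one⟩
  filter_upwards [hIoo] with δ hδ
  have h1' : (0:ℝ) ≤ 1 - δ := by linarith [hδ.2]
  have hL : 0 < (1-δ)*a + δ*b :=
    add_pos_of_nonneg_of_pos (mul_nonneg h1' ha) (mul_pos hδ.1 hb)
  have hM : 0 < (1-δ)*c + δ*d :=
    add_pos_of_nonneg_of_pos (mul_nonneg h1' hc) (mul_pos hδ.1 hd)
  have hN : 0 < (1-δ)*e + δ*f :=
    add_pos_of_nonneg_of_pos (mul_nonneg h1' he) (mul_pos hδ.1 hf)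
  rw [Real.log_div hL.ne' (mul_pos hM hN).ne', Real.log_mul hM.ne' hN.ne']; ring

noncomputable def MIfun {Y : Type*} [Fintype Y] (R : Y × Y → ℝ) : ℝ :=
  ∑ q : Y × Y, R q * Real.log (R q / ((∑ b, R (q.1, b)) * (∑ a, R (a, q.2))))

lemma MI_tendsto {Y : Type*} [Fintype Y] (R T : Y × Y → ℝ)
    (hR : ∀ q, 0 ≤ R q) (hT : ∀ q, 0 < T q) :
    Tendsto (fun δ : ℝ => MIfun (fun q => (1-δ)*R q + δ*T q))
      (nhdsWithin 0 (Set.Ioi 0)) (nhds (MIfun R)) := by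
  unfold MIfun
  apply tendsto_finset_sum
  intro q _
  have hrow : ∀ δ : ℝ, (∑ b, ((1-δ)*R (q.1, b) + δ*T (q.1, b)))
      = (1-δ)*(∑ b, R (q.1, b)) + δ*(∑ b, T (q.1, b)) := fun δ => by
    rw [Finset.sum_add_distrib, Finset.mul_sum, Finset.mul_sum]
  have hcol : ∀ δ : ℝ, (∑ a, ((1-δ)*R (a, q.2) + δ*T (a, q.2)))
      = (1-δ)*(∑ a, R (a, q.2)) + δ*(∑ a, T (a, q.2)) := fun δ => by
    rw [Finset.sum_add_distrib, Finset.mul_sum, Finset.mul_sum]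
  have hrpos : 0 < ∑ b, T (q.1, b) :=
    Finset.sum_pos (fun i _ => hT _) ⟨q.2, Finset.mem_univ _⟩
  have hcpos : 0 < ∑ a, T (a, q.2) :=
    Finset.sum_pos (fun i _ => hT _) ⟨q.1, Finset.mem_univ _⟩
  have hrle : R q ≤ ∑ b, R (q.1, b) := by
    simpa using Finset.single_le_sum (f := fun b => R (q.1, b))
      (fun i _ => hR _) (Finset.mem_univ q.2)
  have hcle : R q ≤ ∑ a, R (a, q.2) := by
    simpa using Finset.single_le_sum (f := fun a => R (a, q.2))
      (fun i _ => hR _) (Finset.mem_univ q.1)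
  have key := term_tendsto (R q) (T q) (∑ b, R (q.1, b)) (∑ b, T (q.1, b))
    (∑ a, R (a, q.2)) (∑ a, T (a, q.2)) (hR q) (hT q)
    (Finset.sum_nonneg fun i _ => hR _) hrpos
    (Finset.sum_nonneg fun i _ => hR _) hcpos hrle hcle
  exact key.congr fun δ => by rw [hrow δ, hcol δ]

noncomputable def mgE {X : Type*} [Fintype X] (Q : (X × X) × (X × X) → ℝ) :
    X × X → ℝ := fun ab => ∑ cd : X × X, Q (ab, cd)

noncomputable def mgE' {X : Type*} [Fintype X] (Q : (X × X) × (X × X) → ℝ) :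
    X × X → ℝ := fun cd => ∑ ab : X × X, Q (ab, cd)

theorem main {X : Type*} [Fintype X] [Nonempty X]
    (P : (X × X) × (X × X) → ℝ) (hPpos : ∀ p, 0 < P p) (hPsum : ∑ p, P p = 1)
    (Qs : (X × X) × (X × X) → ℝ) (hpos : ∀ p, 0 ≤ Qs p) (hsum : ∑ p, Qs p = 1)
    (hge : MIfun (mgE' Qs) ≥ MIfun (mgE Qs))
    (hgt : MIfun (mgE P) > MIfun (mgE' P))
    (hmin : ∀ Q : (X × X) × (X × X) → ℝ, (∀ p, 0 ≤ Q p) → (∑ p, Q p = 1) →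
      MIfun (mgE' Q) ≥ MIfun (mgE Q) →
      (∑ p, Qs p * Real.log (Qs p / P p)) ≤ ∑ p, Q p * Real.log (Q p / P p)) :
    MIfun (mgE' Qs) = MIfun (mgE Qs) := by
  by_contra hne
  have hlt : MIfun (mgE Qs) < MIfun (mgE' Qs) :=
    lt_of_le_of_ne hge (fun h => hne h.symm)
  have hQsP : Qs ≠ P := by
    intro h; rw [h] at hge; exact absurd hge (not_le.mpr hgt)
  have hDpos : 0 < ∑ p, Qs p * Real.log (Qs p / P p) :=
    gibbs_pos hpos hPpos hsum hPsum hQsP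
  have hmEpos : ∀ q : X × X, 0 ≤ mgE Qs q :=
    fun q => Finset.sum_nonneg fun i _ => hpos _
  have hmE'pos : ∀ q : X × X, 0 ≤ mgE' Qs q :=
    fun q => Finset.sum_nonneg fun i _ => hpos _
  have hmEPpos : ∀ q : X × X, 0 < mgE P q :=
    fun q => Finset.sum_pos (fun i _ => hPpos _) Finset.univ_nonempty
  have hmE'Ppos : ∀ q : X × X, 0 < mgE' P q :=
    fun q => Finset.sum_pos (fun i _ => hPpos _) Finset.univ_nonempty
  have hmE : ∀ δ : ℝ, mgE (fun p => (1-δ)*Qs p + δ*P p)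
      = fun q => (1-δ)*mgE Qs q + δ*mgE P q := fun δ => by
    funext q; simp [mgE, Finset.sum_add_distrib, Finset.mul_sum]
  have hmE' : ∀ δ : ℝ, mgE' (fun p => (1-δ)*Qs p + δ*P p)
      = fun q => (1-δ)*mgE' Qs q + δ*mgE' P q := fun δ => by
    funext q; simp [mgE', Finset.sum_add_distrib, Finset.mul_sum]
  have htE : Tendsto (fun δ : ℝ => MIfun (mgE (fun p => (1-δ)*Qs p + δ*P p)))
      (nhdsWithin 0 (Set.Ioi 0)) (nhds (MIfun (mgE Qs))) :=
    (MI_tendsto (mgE Qs) (mgE P) hmEpos hmEPpos).congr fun δ => by rw [hmE δ]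
  have htE' : Tendsto (fun δ : ℝ => MIfun (mgE' (fun p => (1-δ)*Qs p + δ*P p)))
      (nhdsWithin 0 (Set.Ioi 0)) (nhds (MIfun (mgE' Qs))) :=
    (MI_tendsto (mgE' Qs) (mgE' P) hmE'pos hmE'Ppos).congr fun δ => by rw [hmE' δ]
  have hdiff := htE'.sub htE
  have hev : ∀ᶠ δ in nhdsWithin (0:ℝ) (Set.Ioi 0),
      0 < MIfun (mgE' (fun p => (1-δ)*Qs p + δ*P p))
        - MIfun (mgE (fun p => (1-δ)*Qs p + δ*P p)) :=
    (tendsto_order.1 hdiff).1 0 (by linarith)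
  have hIoo : ∀ᶠ δ in nhdsWithin (0:ℝ) (Set.Ioi 0), δ ∈ Set.Ioo (0:ℝ) 1 :=
    eventually_of_mem (Ioo_mem_nhdsGT_of_mem ⟨le_refl 0, zero_lt_one⟩) (fun _ h => h)
  obtain ⟨δ, hδgt, hδIoo⟩ := (hev.and hIoo).exists
  set Q : (X × X) × (X × X) → ℝ := fun p => (1-δ)*Qs p + δ*P p with hQdef
  have h1' : (0:ℝ) ≤ 1 - δ := by linarith [hδIoo.2]
  have hQpos : ∀ p, 0 ≤ Q p := fun p =>
    add_nonneg (mul_nonneg h1' (hpos p)) (mul_nonneg hδIoo.1.le (hPpos p).le)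
  have hQsum : ∑ p, Q p = 1 := by
    simp only [hQdef, Finset.sum_add_distrib, ← Finset.mul_sum, hsum, hPsum]
    ring
  have hQge : MIfun (mgE' Q) ≥ MIfun (mgE Q) := le_of_lt (by linarith [hδgt])
  have hDle := hmin Q hQpos hQsum hQge
  have hconv : (∑ p, Q p * Real.log (Q p / P p))
      ≤ (1-δ) * ∑ p, Qs p * Real.log (Qs p / P p) := by
    rw [Finset.mul_sum]
    exact Finset.sum_le_sum fun p _ =>
      convex_step (hpos p) (hPpos p) hδIoo.1.le hδIoo.2.le
  nlinarith [hDle, hconv, hDpos, hδIoo.1]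

end Stmt7Aux

/-- For a positive distribution `P ∈ P(X⁴)` with `I(P_e) > I(P_e')`, any minimizer `Q*` of
`D(Q‖P)` over the set `{Q : I(Q_e') ≥ I(Q_e)}` satisfies the equality
`I(Q*_e') = I(Q*_e)`. -/
theorem stmt_7 {X : Type*} [Fintype X] [Nonempty X]
    (P : (X × X) × (X × X) → ℝ) (hPpos : ∀ p, 0 < P p) (hPsum : ∑ p, P p = 1) :
    let S : Set ((X × X) × (X × X) → ℝ) :=
      {Q | (∀ p, 0 ≤ Q p) ∧ ∑ p, Q p = 1};
    let margE : ((X × X) × (X × X) → ℝ) → (X × X → ℝ) :=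
      fun Q ab => ∑ cd : X × X, Q (ab, cd);
    let margE' : ((X × X) × (X × X) → ℝ) → (X × X → ℝ) :=
      fun Q cd => ∑ ab : X × X, Q (ab, cd);
    let MI : (X × X → ℝ) → ℝ := fun R =>
      ∑ q : X × X, R q * Real.log (R q / ((∑ b, R (q.1, b)) * (∑ a, R (a, q.2))));
    let D : ((X × X) × (X × X) → ℝ) → ℝ := fun Q => ∑ p, Q p * Real.log (Q p / P p);
    let F : Set ((X × X) × (X × X) → ℝ) := {Q ∈ S | MI (margE' Q) ≥ MI (margE Q)};
    MI (margE P) > MI (margE' P) →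
      ∀ Qs ∈ F, (∀ Q ∈ F, D Qs ≤ D Q) → MI (margE' Qs) = MI (margE Qs) := by
  intro S margE margE' MI D F hgt Qs hQs hmin
  obtain ⟨⟨hpos, hsum⟩, hge⟩ := hQs
  exact Stmt7Aux.main P hPpos hPsum Qs hpos hsum hge hgt
    (fun Q hq1 hq2 hq3 => hmin Q ⟨⟨hq1, hq2⟩, hq3⟩)
end

section
/- For a tree-structured distribution Q on X^d factorizing as Q(x) = Π_i Q_i(x_i) · Π_{(i,j)∈E_Q} Q_{i,j}(x_i,x_j)/(Q_i(x_i)Q_j(x_j)), and any distribution P̂ on X^d, one has D(P̂||Q) + H(P̂) ≥ Σ_{i∈V} H(P̂_i) − Σ_{(i,j)∈E_Q} I(P̂_{i,j}), with equality when the marginals of Q on nodes and edges of E_Q equal those of P̂. -/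
/-!
The left-hand side is the cross entropy `-∑ P̂ log Q`. By the factorization, `log Q` is a sum of
functions of one coordinate and of the coordinate pairs in `E`, so the cross entropy depends only
on the node and `E`-edge marginals of `P̂`. Root the tree and let `W` be the Markov chain along it
whose root law and transition kernels are the corresponding marginal and conditionals of `P̂`. It
has the node and edge marginals of `P̂`, so `-∑ P̂ log Q = -∑ W log Q ≥ -∑ W log W` by Gibbs'
inequality, and `-∑ W log W = ∑ H(P̂ᵢ) - ∑ I(P̂ᵢⱼ)` over the tree edges. Each tree edge lies in
`E`, possibly reversed, and mutual informations are nonnegative. The global comparison with `W`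
is needed because `E` may list an edge in both orientations.

Under the equality hypotheses, `log Q` is literally the sum defining the right-hand side.
-/

open Finset Function Real

lemma injOn_sym2_parent {V : Type*} {r : V} {par : V → V} (h : V → ℕ)
    (hh : ∀ v, v ≠ r → h (par v) < h v) :
    Set.InjOn (fun v => s(v, par v)) {v | v ≠ r} := by
  intro v hv w hw hvw
  rcases Sym2.eq_iff.1 hvw with ⟨hvw, -⟩ | ⟨hvw, hwv⟩
  · exact hvw
  · have := hvw ▸ hh w hw
    have := hwv ▸ hh v hv
    omega

namespace SimpleGraph

variable {V : Type*} {G : SimpleGraph V}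

lemma Connected.exists_adj_dist_lt (hG : G.Connected) {r v : V} (hv : v ≠ r) :
    ∃ u, G.Adj v u ∧ G.dist r u < G.dist r v := by
  obtain ⟨p, hp⟩ := hG.exists_walk_length_eq_dist r v
  have hnil : ¬p.Nil := fun hn => hv hn.eq.symm
  refine ⟨p.penultimate, (p.adj_penultimate hnil).symm, ?_⟩
  have := dist_le p.dropLast
  have := p.length_dropLast_add_one hnil
  omega

lemma IsTree.exists_parent [Fintype V] (hG : G.IsTree) (r : V) :
    ∃ par : V → V, (∀ v, v ≠ r → G.Adj v (par v) ∧ G.dist r (par v) < G.dist r v)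
      ∧ ∀ a b, G.Adj a b → ∃ v, v ≠ r ∧ s(a, b) = s(v, par v) := by
  classical
  choose! par hpar using fun v (hv : v ≠ r) => hG.connected.exists_adj_dist_lt hv
  refine ⟨par, hpar, fun a b hab => ?_⟩
  -- the `card V - 1` distinct edges `s(v, par v)` are all the edges of the tree
  have hinj : Set.InjOn (fun v => s(v, par v)) ↑(univ.erase r) := fun v hv w hw =>
    injOn_sym2_parent (G.dist r) (fun v hv => (hpar v hv).2) (by simpa using hv) (by simpa using hw)
  have hsub : (univ.erase r).image (fun v => s(v, par v)) ⊆ G.edgeFinset := fun e he => by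
    obtain ⟨v, hv, rfl⟩ := mem_image.1 he
    exact mem_edgeFinset.2 (hpar v (mem_erase.1 hv).1).1
  have hcard : G.edgeFinset.card ≤ ((univ.erase r).image fun v => s(v, par v)).card := by
    rw [card_image_of_injOn hinj, card_erase_of_mem (mem_univ r), card_univ, ← hG.card_edgeFinset]
    simp
  have hab' : s(a, b) ∈ (univ.erase r).image fun v => s(v, par v) := by
    rw [eq_of_subset_of_card_le hsub hcard]
    exact mem_edgeFinset.2 hab
  obtain ⟨v, hv, hvab⟩ := mem_image.1 hab'
  exact ⟨v, (mem_erase.1 hv).1, hvab.symm⟩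

end SimpleGraph

namespace TreeCrossEntropy

variable {ι X : Type*} [Fintype ι]

lemma sum_mul_log_div_eq (p q : ι → ℝ) (hpq : ∀ i, q i = 0 → p i = 0) :
    ∑ i, p i * log (p i / q i) = ∑ i, p i * log (p i) - ∑ i, p i * log (q i) := by
  rw [← sum_sub_distrib]
  refine sum_congr rfl fun i _ => ?_
  by_cases hp : p i = 0
  · simp [hp]
  · rw [log_div hp fun hq => hp (hpq i hq)]
    ring

lemma sum_mul_log_div_nonneg (p q : ι → ℝ) (hp : ∀ i, 0 ≤ p i) (hq : ∀ i, 0 ≤ q i)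
    (hpq : ∀ i, q i = 0 → p i = 0) (hp1 : ∑ i, p i = 1) (hq1 : ∑ i, q i ≤ 1) :
    0 ≤ ∑ i, p i * log (p i / q i) := by
  have hpoint : ∀ i, p i - q i ≤ p i * log (p i / q i) := fun i => by
    rcases (hq i).eq_or_lt with hqi | hqi
    · simp [hpq i hqi.symm, ← hqi]
    · have key : q i * InformationTheory.klFun (p i / q i)
          = p i * log (p i / q i) + q i - p i := by
        rw [InformationTheory.klFun_apply]
        field_simp
      linarith [mul_nonneg hqi.le (InformationTheory.klFun_nonneg (div_nonneg (hp i) hqi.le))]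
  calc (0 : ℝ) ≤ ∑ i, (p i - q i) := by rw [sum_sub_distrib, hp1]; linarith
    _ ≤ _ := sum_le_sum fun i _ => hpoint i

section Pair

variable [Fintype X]

noncomputable def entropy (p : X → ℝ) : ℝ := -∑ a, p a * log (p a)

variable (R : X → X → ℝ)

noncomputable def mutualInfo : ℝ :=
  ∑ a, ∑ b, R a b * log (R a b / ((∑ b', R a b') * ∑ a', R a' b))

/-- The law of the first coordinate of `R` given that the second one is `b`, taken uniform when
`b` has probability zero so that it is always a Markov kernel. -/
noncomputable def condKernel (b a : X) : ℝ :=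
  if ∑ a', R a' b = 0 then (Fintype.card X : ℝ)⁻¹ else R a b / ∑ a', R a' b

variable {R}

lemma eq_zero_of_sum_left_eq_zero (hR : ∀ a b, 0 ≤ R a b) {a b : X} (h : ∑ a', R a' b = 0) :
    R a b = 0 :=
  (sum_eq_zero_iff_of_nonneg fun a' _ => hR a' b).1 h a (mem_univ a)

lemma eq_zero_of_sum_right_eq_zero (hR : ∀ a b, 0 ≤ R a b) {a b : X} (h : ∑ b', R a b' = 0) :
    R a b = 0 :=
  (sum_eq_zero_iff_of_nonneg fun b' _ => hR a b').1 h b (mem_univ b)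

lemma condKernel_nonneg (hR : ∀ a b, 0 ≤ R a b) (b a : X) : 0 ≤ condKernel R b a := by
  unfold condKernel
  split_ifs
  · positivity
  · exact div_nonneg (hR a b) (sum_nonneg fun a' _ => hR a' b)

lemma sum_condKernel [Nonempty X] (b : X) : ∑ a, condKernel R b a = 1 := by
  unfold condKernel
  split_ifs with h
  · simp
  · rw [← sum_div, div_self h]

lemma sum_left_mul_condKernel (hR : ∀ a b, 0 ≤ R a b) (b a : X) :
    (∑ a', R a' b) * condKernel R b a = R a b := by
  unfold condKernel
  split_ifs with h
  · rw [h, zero_mul, eq_zero_of_sum_left_eq_zero hR h]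
  · field_simp

lemma mutualInfo_eq (hR : ∀ a b, 0 ≤ R a b) :
    mutualInfo R = ∑ a, ∑ b, R a b * log (R a b) - ∑ a, (∑ b, R a b) * log (∑ b, R a b)
      - ∑ b, (∑ a, R a b) * log (∑ a, R a b) := by
  have hterm : ∀ a b, R a b * log (R a b / ((∑ b', R a b') * ∑ a', R a' b))
      = R a b * log (R a b) - R a b * log (∑ b', R a b') - R a b * log (∑ a', R a' b) := by
    intro a b
    by_cases hab : R a b = 0
    · simp [hab]
    have h1 : ∑ b', R a b' ≠ 0 := fun h => hab (eq_zero_of_sum_right_eq_zero hR h)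
    have h2 : ∑ a', R a' b ≠ 0 := fun h => hab (eq_zero_of_sum_left_eq_zero hR h)
    rw [log_div hab (mul_ne_zero h1 h2), log_mul h1 h2]
    ring
  simp_rw [mutualInfo, hterm, sum_sub_distrib, ← sum_mul]
  rw [sum_comm (f := fun a b => R a b * log (∑ a', R a' b))]
  simp_rw [← sum_mul]

lemma sum_mul_log_condKernel (hR : ∀ a b, 0 ≤ R a b) :
    ∑ a, ∑ b, R a b * log (condKernel R b a)
      = mutualInfo R + ∑ a, (∑ b, R a b) * log (∑ b, R a b) := by
  have hterm : ∀ a b, R a b * log (condKernel R b a)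
      = R a b * log (R a b) - R a b * log (∑ a', R a' b) := by
    intro a b
    by_cases hab : R a b = 0
    · simp [hab]
    have h2 : ∑ a', R a' b ≠ 0 := fun h => hab (eq_zero_of_sum_left_eq_zero hR h)
    rw [condKernel, if_neg h2, log_div hab h2]
    ring
  simp_rw [hterm, sum_sub_distrib, mutualInfo_eq hR]
  rw [sum_comm (f := fun a b => R a b * log (∑ a', R a' b))]
  simp_rw [← sum_mul]
  ring

lemma mutualInfo_nonneg (hR : ∀ a b, 0 ≤ R a b) (hR1 : ∑ a, ∑ b, R a b = 1) :
    0 ≤ mutualInfo R := by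
  have h := sum_mul_log_div_nonneg (fun ab : X × X => R ab.1 ab.2)
    (fun ab => (∑ b', R ab.1 b') * ∑ a', R a' ab.2) (fun ab => hR ab.1 ab.2)
    (fun ab => mul_nonneg (sum_nonneg fun _ _ => hR _ _) (sum_nonneg fun _ _ => hR _ _))
    (fun ab h => (mul_eq_zero.1 h).elim (eq_zero_of_sum_right_eq_zero hR)
      (eq_zero_of_sum_left_eq_zero hR))
    (by rwa [Fintype.sum_prod_type])
    (le_of_eq (by
      rw [Fintype.sum_prod_type]
      dsimp only
      rw [← sum_mul_sum, hR1, sum_comm, hR1, one_mul]))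
  rwa [Fintype.sum_prod_type] at h

lemma mutualInfo_swap : mutualInfo (fun a b => R b a) = mutualInfo R := by
  unfold mutualInfo
  rw [sum_comm]
  simp_rw [mul_comm (∑ a', R _ a')]

end Pair

section Marginal

variable [Fintype X] [DecidableEq X] {V : Type*} [Fintype V] [DecidableEq V]

noncomputable def nodeMarginal (μ : (V → X) → ℝ) (i : V) (a : X) : ℝ :=
  ∑ f, if f i = a then μ f else 0

noncomputable def edgeMarginal (μ : (V → X) → ℝ) (i j : V) (a b : X) : ℝ :=
  ∑ f, if f i = a ∧ f j = b then μ f else 0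

variable (μ : (V → X) → ℝ)

lemma sum_nodeMarginal_mul (i : V) (c : X → ℝ) :
    ∑ a, nodeMarginal μ i a * c a = ∑ f, μ f * c (f i) := by
  simp_rw [nodeMarginal, sum_mul, ite_mul, zero_mul]
  rw [sum_comm]
  simp [sum_ite_eq]

lemma sum_edgeMarginal_mul (i j : V) (c : X → X → ℝ) :
    ∑ a, ∑ b, edgeMarginal μ i j a b * c a b = ∑ f, μ f * c (f i) (f j) := by
  simp_rw [edgeMarginal, sum_mul, ite_mul, zero_mul]
  rw [sum_congr rfl fun a _ => sum_comm, sum_comm]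
  simp [ite_and, sum_ite_eq]

lemma sum_edgeMarginal_right (i j : V) (a : X) :
    ∑ b, edgeMarginal μ i j a b = nodeMarginal μ i a := by
  simp_rw [edgeMarginal, nodeMarginal, ite_and]
  rw [sum_comm]
  simp [sum_ite_eq]

lemma sum_edgeMarginal_left (i j : V) (b : X) :
    ∑ a, edgeMarginal μ i j a b = nodeMarginal μ j b := by
  simp_rw [edgeMarginal, nodeMarginal, ite_and]
  rw [sum_comm]
  refine sum_congr rfl fun f _ => ?_
  split_ifs <;> simp [sum_ite_eq, *]

lemma edgeMarginal_swap (i j : V) (a b : X) :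
    edgeMarginal μ j i b a = edgeMarginal μ i j a b := by
  simp_rw [edgeMarginal, and_comm]

lemma mutualInfo_edgeMarginal (i j : V) :
    mutualInfo (edgeMarginal μ i j) = ∑ a, ∑ b, edgeMarginal μ i j a b
      * log (edgeMarginal μ i j a b / (nodeMarginal μ i a * nodeMarginal μ j b)) := by
  simp_rw [mutualInfo, sum_edgeMarginal_right, sum_edgeMarginal_left]

lemma mutualInfo_edgeMarginal_congr {i j k l : V} (h : s(i, j) = s(k, l)) :
    mutualInfo (edgeMarginal μ i j) = mutualInfo (edgeMarginal μ k l) := by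
  rcases Sym2.eq_iff.1 h with ⟨rfl, rfl⟩ | ⟨rfl, rfl⟩
  · rfl
  · rw [← mutualInfo_swap (R := edgeMarginal μ i j)]
    congr 1
    ext a b
    exact (edgeMarginal_swap μ i j b a).symm

variable {μ}

lemma edgeMarginal_nonneg (hμ : ∀ f, 0 ≤ μ f) (i j : V) (a b : X) :
    0 ≤ edgeMarginal μ i j a b := by
  unfold edgeMarginal
  exact sum_nonneg fun f _ => by split_ifs <;> simp [hμ f]

lemma mutualInfo_edgeMarginal_nonneg (hμ : ∀ f, 0 ≤ μ f) (hμ1 : ∑ f, μ f = 1) (i j : V) :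
    0 ≤ mutualInfo (edgeMarginal μ i j) :=
  mutualInfo_nonneg (edgeMarginal_nonneg hμ i j)
    (by simpa [hμ1] using sum_edgeMarginal_mul μ i j 1)

end Marginal

section MarkovChain

variable {V : Type*} [Fintype V] [DecidableEq V] (r : V) (par : V → V)

/-- `κ v b a` is the probability of the value `a` at `v` given the value `b` at `par v`. -/
noncomputable def markovChain (ρ : X → ℝ) (κ : V → X → X → ℝ) (f : V → X) : ℝ :=
  ρ (f r) * ∏ v ∈ univ.erase r, κ v (f (par v)) (f v)

variable {r par} {ρ : X → ℝ} {κ : V → X → X → ℝ}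

lemma markovChain_mul_log (f : V → X) :
    markovChain r par ρ κ f * log (markovChain r par ρ κ f)
      = markovChain r par ρ κ f
        * (log (ρ (f r)) + ∑ v ∈ univ.erase r, log (κ v (f (par v)) (f v))) := by
  by_cases h0 : markovChain r par ρ κ f = 0
  · simp [h0]
  obtain ⟨hρ, hκ⟩ := mul_ne_zero_iff.1 h0
  rw [markovChain, log_mul hρ hκ, log_prod fun v hv => prod_ne_zero_iff.1 hκ v hv]

variable [Fintype X]

lemma sum_sum_update_eq (u : V) (F : (V → X) → ℝ) :
    ∑ f, ∑ x, F (update f u x) = Fintype.card X * ∑ f, F f := by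
  have hinv : Involutive fun p : (V → X) × X => (update p.1 u p.2, p.1 u) := fun p => by simp
  rw [← Fintype.sum_prod_type',
    Fintype.sum_equiv hinv.toPerm (fun p => F (update p.1 u p.2)) (fun p => F p.1) fun _ => rfl,
    Fintype.sum_prod_type]
  simp [mul_sum]

/-- Uniform kernels outside `A` cut the chain down to `A` without changing its total mass. -/
noncomputable def restrictKernel (κ : V → X → X → ℝ) (A : Finset V) : V → X → X → ℝ :=
  fun v b a => if v ∈ A then κ v b a else (Fintype.card X : ℝ)⁻¹

lemma restrictKernel_univ : restrictKernel κ univ = κ := by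
  ext; simp [restrictKernel]

lemma markovChain_restrictKernel_insert [Nonempty X] {u : V} {A : Finset V} (hu : u ≠ r)
    (huA : u ∉ A) (f : V → X) :
    markovChain r par ρ (restrictKernel κ (insert u A)) f
      = Fintype.card X * κ u (f (par u)) (f u) * markovChain r par ρ (restrictKernel κ A) f := by
  have hmem : u ∈ univ.erase r := mem_erase.2 ⟨hu, mem_univ u⟩
  have hrest : ∀ v ∈ (univ.erase r).erase u,
      restrictKernel κ (insert u A) v (f (par v)) (f v) = restrictKernel κ A v (f (par v)) (f v) :=
    fun v hv => by simp [restrictKernel, (mem_erase.1 hv).1]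
  simp only [markovChain, ← mul_prod_erase _ _ hmem, prod_congr rfl hrest]
  simp only [restrictKernel, mem_insert, huA, or_false, ↓reduceIte]
  field_simp

lemma markovChain_restrictKernel_update {u : V} {A : Finset V} (hu : u ≠ r) (huA : u ∉ A)
    (hpar : ∀ w ∈ A, w ≠ r → par w ≠ u) (f : V → X) (x : X) :
    markovChain r par ρ (restrictKernel κ A) (update f u x)
      = markovChain r par ρ (restrictKernel κ A) f := by
  unfold markovChain restrictKernel
  rw [update_of_ne hu.symm]
  congr 1
  refine prod_congr rfl fun v hv => ?_
  split_ifs with hvA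
  · rw [update_of_ne (hpar v hvA (mem_erase.1 hv).1), update_of_ne (ne_of_mem_of_not_mem hvA huA)]
  · rfl

lemma sum_markovChain_restrictKernel_insert [Nonempty X] {u : V} {A : Finset V} (hu : u ≠ r)
    (huA : u ∉ A) (hpar : ∀ w ∈ A, w ≠ r → par w ≠ u) (hpu : par u ≠ u) (G : (V → X) → ℝ) :
    ∑ f, markovChain r par ρ (restrictKernel κ (insert u A)) f * G f
      = ∑ f, markovChain r par ρ (restrictKernel κ A) f
          * ∑ a, κ u (f (par u)) a * G (update f u a) := by
  refine mul_left_cancel₀ (Nat.cast_ne_zero.2 (Fintype.card_ne_zero (α := X))) ?_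
  rw [← sum_sum_update_eq u, mul_sum]
  refine sum_congr rfl fun f _ => ?_
  simp_rw [markovChain_restrictKernel_insert hu huA, markovChain_restrictKernel_update hu huA hpar,
    update_self, update_of_ne hpu, mul_sum]
  exact sum_congr rfl fun a _ => by ring

variable [Nonempty X] (h : V → ℕ) (hκ : ∀ v b, ∑ a, κ v b a = 1)
  (hh : ∀ v, v ≠ r → h (par v) < h v)
include hκ hh

lemma sum_markovChain_eq_restrictKernel {S : Finset V} (hrS : r ∈ S)
    (hS : ∀ w ∈ S, w ≠ r → par w ∈ S) (g : (V → X) → ℝ)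
    (hg : ∀ f u x, u ∉ S → g (update f u x) = g f) :
    ∑ f, markovChain r par ρ κ f * g f = ∑ f, markovChain r par ρ (restrictKernel κ S) f * g f := by
  suffices ∀ A, S ⊆ A → ∑ f, markovChain r par ρ (restrictKernel κ A) f * g f
      = ∑ f, markovChain r par ρ (restrictKernel κ S) f * g f by
    simpa [restrictKernel_univ] using this univ (subset_univ S)
  intro A
  induction A using Finset.strongInduction with
  | H A ih =>
  intro hSA
  rcases (A \ S).eq_empty_or_nonempty with hAS | hAS
  · rw [subset_antisymm (sdiff_eq_empty_iff_subset.1 hAS) hSA]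
  -- a vertex of maximal height is the parent of no vertex with a proper kernel
  obtain ⟨u, hu, hmax⟩ := exists_max_image (A \ S) h hAS
  obtain ⟨huA, huS⟩ := mem_sdiff.1 hu
  have hur : u ≠ r := (ne_of_mem_of_not_mem hrS huS).symm
  have hpar : ∀ w ∈ A.erase u, w ≠ r → par w ≠ u := fun w hw hwr hwu => by
    by_cases hwS : w ∈ S
    · exact huS (hwu ▸ hS w hwS hwr)
    · have := hmax w (mem_sdiff.2 ⟨mem_of_mem_erase hw, hwS⟩)
      have := hwu ▸ hh w hwr
      omega
  rw [← insert_erase huA, sum_markovChain_restrictKernel_insert hur (notMem_erase u A) hpar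
    fun hu' => (hh u hur).ne (congrArg h hu')]
  simp_rw [hg _ u _ huS, ← sum_mul, hκ, one_mul]
  exact ih _ (erase_ssubset huA) fun w hw => mem_erase.2 ⟨ne_of_mem_of_not_mem hw huS, hSA hw⟩

lemma sum_markovChain_mul_root (c : X → ℝ) :
    ∑ f, markovChain r par ρ κ f * c (f r) = ∑ a, ρ a * c a := by
  rw [sum_markovChain_eq_restrictKernel h hκ hh (mem_singleton_self r) (by simp) _
    fun f u x hu => by rw [update_of_ne (notMem_singleton.1 hu).symm]]
  -- with all kernels uniform the chain is a product measure
  set φ : V → X → ℝ := fun v x => if v = r then ρ x * c x else (Fintype.card X : ℝ)⁻¹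
  have hprod : ∀ f, markovChain r par ρ (restrictKernel κ {r}) f * c (f r) = ∏ v, φ v (f v) := by
    intro f
    rw [← mul_prod_erase univ _ (mem_univ r), markovChain]
    simp only [φ, restrictKernel, mem_singleton, ↓reduceIte,
      prod_ite_of_false fun v hv => (mem_erase.1 hv).1, prod_const]
    ring
  rw [sum_congr rfl fun f _ => hprod f, ← Fintype.prod_sum, ← mul_prod_erase univ _ (mem_univ r)]
  simp [φ]

lemma sum_markovChain_mul_parent {v : V} (hv : v ≠ r) (c : X → X → ℝ) :
    ∑ f, markovChain r par ρ κ f * c (f (par v)) (f v)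
      = ∑ f, markovChain r par ρ κ f * ∑ a, κ v (f (par v)) a * c (f (par v)) a := by
  -- the vertices lower than `v` are closed under `par`, and `v` is a leaf once added to them
  set S := insert r (univ.filter fun w => h w < h v)
  have hrS : r ∈ S := mem_insert_self r _
  have hS : ∀ w ∈ S, w ≠ r → par w ∈ S := fun w hw hwr =>
    mem_insert_of_mem (mem_filter.2 ⟨mem_univ _,
      (hh w hwr).trans (mem_filter.1 ((mem_insert.1 hw).resolve_left hwr)).2⟩)
  have hvS : v ∉ S := by simp [S, hv]
  have hpv : par v ∈ S := mem_insert_of_mem (mem_filter.2 ⟨mem_univ _, hh v hv⟩)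
  have hpar : ∀ w ∈ S, w ≠ r → par w ≠ v := fun w hw hwr hwv => hvS (hwv ▸ hS w hw hwr)
  calc ∑ f, markovChain r par ρ κ f * c (f (par v)) (f v)
      = ∑ f, markovChain r par ρ (restrictKernel κ (insert v S)) f * c (f (par v)) (f v) := by
        refine sum_markovChain_eq_restrictKernel h hκ hh (mem_insert_of_mem hrS) ?_ _ ?_
        · intro w hw hwr
          rcases mem_insert.1 hw with rfl | hw
          · exact mem_insert_of_mem hpv
          · exact mem_insert_of_mem (hS w hw hwr)
        · intro f u x hu
          rw [update_of_ne (ne_of_mem_of_not_mem (mem_insert_of_mem hpv) hu),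
            update_of_ne (ne_of_mem_of_not_mem (mem_insert_self v S) hu)]
    _ = ∑ f, markovChain r par ρ (restrictKernel κ S) f
          * ∑ a, κ v (f (par v)) a * c (f (par v)) a := by
        rw [sum_markovChain_restrictKernel_insert hv hvS hpar (ne_of_mem_of_not_mem hpv hvS)]
        simp [update_of_ne (ne_of_mem_of_not_mem hpv hvS)]
    _ = _ := by
        refine (sum_markovChain_eq_restrictKernel h hκ hh hrS hS _ fun f u x hu => ?_).symm
        rw [update_of_ne (ne_of_mem_of_not_mem hpv hu)]

end MarkovChain

section TreeProjection

variable [Fintype X] [DecidableEq X] {V : Type*} [Fintype V] [DecidableEq V]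

variable (r : V) (par : V → V) in
noncomputable def treeProjection (P : (V → X) → ℝ) : (V → X) → ℝ :=
  markovChain r par (nodeMarginal P r) fun v => condKernel (edgeMarginal P v (par v))

variable {r : V} {par : V → V} {P : (V → X) → ℝ} (hP : ∀ f, 0 ≤ P f)
include hP

lemma treeProjection_nonneg (f : V → X) : 0 ≤ treeProjection r par P f := by
  refine mul_nonneg (sum_nonneg fun g _ => ?_) (prod_nonneg fun v _ => ?_)
  · split_ifs <;> simp [hP g]
  · exact condKernel_nonneg (edgeMarginal_nonneg hP _ _) _ _

lemma sum_mul_sum_condKernel (i j : V) (c : X → X → ℝ) :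
    ∑ f, P f * ∑ a, condKernel (edgeMarginal P i j) (f j) a * c (f j) a
      = ∑ f, P f * c (f j) (f i) := by
  rw [← sum_nodeMarginal_mul P j fun b => ∑ a, condKernel (edgeMarginal P i j) b a * c b a,
    ← sum_edgeMarginal_mul P i j fun a b => c b a, sum_comm]
  refine sum_congr rfl fun b _ => ?_
  rw [mul_sum, ← sum_edgeMarginal_left P i j b]
  exact sum_congr rfl fun a _ => by
    rw [← mul_assoc, sum_left_mul_condKernel (edgeMarginal_nonneg hP i j)]

variable [Nonempty X] (h : V → ℕ) (hh : ∀ v, v ≠ r → h (par v) < h v)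
include hh

lemma sum_treeProjection_mul_node (v : V) (c : X → ℝ) :
    ∑ f, treeProjection r par P f * c (f v) = ∑ f, P f * c (f v) := by
  induction hv : h v using Nat.strong_induction_on generalizing v c with
  | _ n ih =>
  have hκ : ∀ v b, ∑ a, condKernel (edgeMarginal P v (par v)) b a = 1 :=
    fun _ _ => sum_condKernel _
  by_cases hvr : v = r
  · subst hvr
    rw [treeProjection, sum_markovChain_mul_root h hκ hh, sum_nodeMarginal_mul]
  · rw [treeProjection, sum_markovChain_mul_parent h hκ hh hvr fun _ a => c a, ← treeProjection,
      ih _ (hv ▸ hh v hvr) (par v)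
        (fun b => ∑ a, condKernel (edgeMarginal P v (par v)) b a * c a) rfl,
      sum_mul_sum_condKernel hP v (par v) fun _ a => c a]

lemma sum_treeProjection_mul_edge {v : V} (hv : v ≠ r) (c : X → X → ℝ) :
    ∑ f, treeProjection r par P f * c (f (par v)) (f v) = ∑ f, P f * c (f (par v)) (f v) := by
  rw [treeProjection, sum_markovChain_mul_parent h (fun _ _ => sum_condKernel _) hh hv, ← treeProjection,
    sum_treeProjection_mul_node hP h hh (par v)
      fun b => ∑ a, condKernel (edgeMarginal P v (par v)) b a * c b a,
    sum_mul_sum_condKernel hP]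

lemma sum_treeProjection_mul_of_sym2_eq {i j v : V} (hv : v ≠ r) (hij : s(i, j) = s(v, par v))
    (c : X → X → ℝ) :
    ∑ f, treeProjection r par P f * c (f i) (f j) = ∑ f, P f * c (f i) (f j) := by
  rcases Sym2.eq_iff.1 hij with ⟨rfl, rfl⟩ | ⟨rfl, rfl⟩
  · exact sum_treeProjection_mul_edge hP h hh hv fun b a => c a b
  · exact sum_treeProjection_mul_edge hP h hh hv c

lemma sum_treeProjection : ∑ f, treeProjection r par P f = ∑ f, P f := by
  simpa using sum_treeProjection_mul_node hP h hh r 1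

lemma sum_treeProjection_mul_log :
    ∑ f, treeProjection r par P f * log (treeProjection r par P f)
      = ∑ i, ∑ a, nodeMarginal P i a * log (nodeMarginal P i a)
        + ∑ v ∈ univ.erase r, mutualInfo (edgeMarginal P v (par v)) := by
  simp_rw [treeProjection, markovChain_mul_log, mul_add, mul_sum, sum_add_distrib]
  rw [sum_comm, ← add_sum_erase _ _ (mem_univ r), add_assoc, ← sum_add_distrib, ← treeProjection]
  congr 1
  · rw [sum_treeProjection_mul_node hP h hh r fun a => log (nodeMarginal P r a),
      sum_nodeMarginal_mul]
  · refine sum_congr rfl fun v hv => ?_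
    rw [sum_treeProjection_mul_edge hP h hh (mem_erase.1 hv).1 fun b a => log (condKernel _ b a),
      ← sum_edgeMarginal_mul P v (par v) fun a b => log (condKernel _ b a),
      sum_mul_log_condKernel (edgeMarginal_nonneg hP _ _)]
    simp_rw [sum_edgeMarginal_right]
    ring

end TreeProjection

variable [Fintype X] {V : Type*} [Fintype V] [DecidableEq V]

lemma sum_mul_log_of_eq_mul_prod {Q : (V → X) → ℝ} (hQ : ∀ f, 0 < Q f) (α : V → X → ℝ)
    (E : Finset (V × V)) (β : V × V → X → X → ℝ)
    (hfac : ∀ f, Q f = (∏ i, α i (f i)) * ∏ e ∈ E, β e (f e.1) (f e.2)) (μ : (V → X) → ℝ) :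
    ∑ f, μ f * log (Q f)
      = ∑ i, ∑ f, μ f * log (α i (f i)) + ∑ e ∈ E, ∑ f, μ f * log (β e (f e.1) (f e.2)) := by
  have hlog : ∀ f, log (Q f)
      = ∑ i, log (α i (f i)) + ∑ e ∈ E, log (β e (f e.1) (f e.2)) := fun f => by
    obtain ⟨hα, hβ⟩ := mul_ne_zero_iff.1 (hfac f ▸ (hQ f).ne')
    rw [hfac f, log_mul hα hβ, log_prod fun i _ => prod_ne_zero_iff.1 hα i (mem_univ i),
      log_prod fun e he => prod_ne_zero_iff.1 hβ e he]
  simp_rw [hlog, mul_add, mul_sum, sum_add_distrib]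
  congr 1 <;> exact sum_comm

variable [DecidableEq X] {P Q : (V → X) → ℝ} {E : Finset (V × V)}

lemma sum_mutualInfo_parent_le {r : V} {par : V → V} (h : V → ℕ)
    (hh : ∀ v, v ≠ r → h (par v) < h v) (hP : ∀ f, 0 ≤ P f) (hP1 : ∑ f, P f = 1)
    (hcover : ∀ v, v ≠ r → ∃ e ∈ E, s(e.1, e.2) = s(v, par v)) :
    ∑ v ∈ univ.erase r, mutualInfo (edgeMarginal P v (par v))
      ≤ ∑ e ∈ E, mutualInfo (edgeMarginal P e.1 e.2) := by
  choose! e heE hes using hcover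
  have hinj : Set.InjOn e ↑(univ.erase r) := fun v hv w hw hvw => by
    have hv := (mem_erase.1 hv).1
    have hw := (mem_erase.1 hw).1
    have hsym : s((e v).1, (e v).2) = s((e w).1, (e w).2) := by rw [hvw]
    rw [hes v hv, hes w hw] at hsym
    exact injOn_sym2_parent h hh hv hw hsym
  calc ∑ v ∈ univ.erase r, mutualInfo (edgeMarginal P v (par v))
      = ∑ v ∈ univ.erase r, mutualInfo (edgeMarginal P (e v).1 (e v).2) :=
        sum_congr rfl fun v hv => mutualInfo_edgeMarginal_congr P (hes v (mem_erase.1 hv).1).symm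
    _ = ∑ x ∈ (univ.erase r).image e, mutualInfo (edgeMarginal P x.1 x.2) := by
        rw [sum_image hinj]
    _ ≤ _ := sum_le_sum_of_subset_of_nonneg
        (fun x hx => by obtain ⟨v, hv, rfl⟩ := mem_image.1 hx; exact heE v (mem_erase.1 hv).1)
        fun x _ _ => mutualInfo_edgeMarginal_nonneg hP hP1 x.1 x.2

theorem sum_mul_log_div_add_entropy_ge [Nonempty X] (hE : ∀ p ∈ E, p.1 ≠ p.2)
    (htree : (SimpleGraph.fromEdgeSet ((fun p : V × V => s(p.1, p.2)) '' ↑E)).IsTree)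
    (hQ : ∀ f, 0 < Q f) (hQ1 : ∑ f, Q f = 1) (hP : ∀ f, 0 ≤ P f) (hP1 : ∑ f, P f = 1)
    (α : V → X → ℝ) (β : V × V → X → X → ℝ)
    (hfac : ∀ f, Q f = (∏ i, α i (f i)) * ∏ e ∈ E, β e (f e.1) (f e.2)) :
    (∑ f, P f * log (P f / Q f)) + (-∑ f, P f * log (P f))
      ≥ ∑ i, entropy (nodeMarginal P i) - ∑ e ∈ E, mutualInfo (edgeMarginal P e.1 e.2) := by
  obtain ⟨r⟩ := htree.connected.nonempty
  obtain ⟨par, hpar, hcover⟩ := htree.exists_parent r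
  have hh := fun v hv => (hpar v hv).2
  set W := treeProjection r par P
  have hQ0 : ∀ (μ : (V → X) → ℝ) f, Q f = 0 → μ f = 0 := fun _ f hf => absurd hf (hQ f).ne'
  have hcross : ∑ f, W f * log (Q f) = ∑ f, P f * log (Q f) := by
    rw [sum_mul_log_of_eq_mul_prod hQ α E β hfac, sum_mul_log_of_eq_mul_prod hQ α E β hfac]
    congr 1
    · exact sum_congr rfl fun i _ => sum_treeProjection_mul_node hP _ hh i fun a => log (α i a)
    · refine sum_congr rfl fun e he => ?_
      obtain ⟨v, hv, hev⟩ :=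
        hcover e.1 e.2 ((SimpleGraph.fromEdgeSet_adj _).2 ⟨⟨e, he, rfl⟩, hE e he⟩)
      exact sum_treeProjection_mul_of_sym2_eq hP _ hh hv hev fun a b => log (β e a b)
  have hgibbs := sum_mul_log_div_nonneg W Q (treeProjection_nonneg hP) (fun f => (hQ f).le)
    (hQ0 W) (by rw [sum_treeProjection hP _ hh, hP1]) hQ1.le
  rw [sum_mul_log_div_eq _ _ (hQ0 W), sum_treeProjection_mul_log hP _ hh, hcross] at hgibbs
  have hMI := sum_mutualInfo_parent_le _ hh hP hP1 fun v hv =>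
    ((SimpleGraph.fromEdgeSet_adj _).1 (hpar v hv).1).1
  rw [sum_mul_log_div_eq _ _ (hQ0 P)]
  simp only [entropy, sum_neg_distrib]
  linarith

theorem sum_mul_log_div_add_entropy_eq (hQ : ∀ f, 0 < Q f) (α : V → X → ℝ)
    (β : V × V → X → X → ℝ) (hfac : ∀ f, Q f = (∏ i, α i (f i)) * ∏ e ∈ E, β e (f e.1) (f e.2))
    (hα : ∀ i a, α i a = nodeMarginal P i a)
    (hβ : ∀ e ∈ E, ∀ a b,
      β e a b = edgeMarginal P e.1 e.2 a b / (nodeMarginal P e.1 a * nodeMarginal P e.2 b)) :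
    (∑ f, P f * log (P f / Q f)) + (-∑ f, P f * log (P f))
      = ∑ i, entropy (nodeMarginal P i) - ∑ e ∈ E, mutualInfo (edgeMarginal P e.1 e.2) := by
  have hnode : ∀ i, ∑ f, P f * log (α i (f i)) = -entropy (nodeMarginal P i) := fun i => by
    simp_rw [← sum_nodeMarginal_mul P i fun a => log (α i a), hα, entropy, neg_neg]
  have hedge : ∀ e ∈ E, ∑ f, P f * log (β e (f e.1) (f e.2))
      = mutualInfo (edgeMarginal P e.1 e.2) := fun e he => by
    rw [← sum_edgeMarginal_mul P e.1 e.2 fun a b => log (β e a b), mutualInfo_edgeMarginal]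
    simp_rw [hβ e he]
  rw [sum_mul_log_div_eq _ _ fun f hf => absurd hf (hQ f).ne',
    sum_mul_log_of_eq_mul_prod hQ α E β hfac P, sum_congr rfl fun i _ => hnode i,
    sum_congr rfl hedge, sum_neg_distrib]
  ring

end TreeCrossEntropy

/-- For a tree-structured distribution `Q` factorizing over a spanning tree with edge set `E`,
and any distribution `P̂`, one has
`D(P̂‖Q) + H(P̂) ≥ Σ_i H(P̂_i) − Σ_{(i,j)∈E} I(P̂_{i,j})`, with equality when the node and
edge marginals of `Q` equal those of `P̂`. -/
theorem stmt_13 {X : Type*} [Fintype X] [DecidableEq X] [Nonempty X] (d : ℕ)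
    (E : Finset (Fin d × Fin d)) (hE : ∀ p ∈ E, p.1 ≠ p.2)
    (htree : (SimpleGraph.fromEdgeSet
      ((fun p : Fin d × Fin d => s(p.1, p.2)) '' ↑E)).IsTree)
    (Q Phat : (Fin d → X) → ℝ)
    (hQpos : ∀ f, 0 < Q f) (hQsum : ∑ f, Q f = 1)
    (hPnn : ∀ f, 0 ≤ Phat f) (hPsum : ∑ f, Phat f = 1) :
    let Qi : Fin d → X → ℝ := fun i a => ∑ f, if f i = a then Q f else 0;
    let Qij : Fin d → Fin d → X → X → ℝ :=
      fun i j a b => ∑ f, if f i = a ∧ f j = b then Q f else 0;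
    let Pi : Fin d → X → ℝ := fun i a => ∑ f, if f i = a then Phat f else 0;
    let Pij : Fin d → Fin d → X → X → ℝ :=
      fun i j a b => ∑ f, if f i = a ∧ f j = b then Phat f else 0;
    let H : (X → ℝ) → ℝ := fun r => -∑ a, r a * Real.log (r a);
    let MI2 : (X → X → ℝ) → ℝ := fun R =>
      ∑ a, ∑ b, R a b * Real.log (R a b / ((∑ b', R a b') * (∑ a', R a' b)));
    (∀ f, Q f = (∏ i, Qi i (f i)) *
        ∏ p ∈ E, Qij p.1 p.2 (f p.1) (f p.2) / (Qi p.1 (f p.1) * Qi p.2 (f p.2))) →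
    ((∑ f, Phat f * Real.log (Phat f / Q f)) + (-∑ f, Phat f * Real.log (Phat f))
        ≥ (∑ i, H (Pi i)) - ∑ p ∈ E, MI2 (fun a b => Pij p.1 p.2 a b)) ∧
    ((∀ i a, Qi i a = Pi i a) →
      (∀ p ∈ E, ∀ a b, Qij p.1 p.2 a b = Pij p.1 p.2 a b) →
      (∑ f, Phat f * Real.log (Phat f / Q f)) + (-∑ f, Phat f * Real.log (Phat f))
        = (∑ i, H (Pi i)) - ∑ p ∈ E, MI2 (fun a b => Pij p.1 p.2 a b)) := by
  intro Qi Qij Pi Pij H MI2 hQ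
  set β : Fin d × Fin d → X → X → ℝ := fun e a b => Qij e.1 e.2 a b / (Qi e.1 a * Qi e.2 b)
  refine ⟨TreeCrossEntropy.sum_mul_log_div_add_entropy_ge hE htree hQpos hQsum hPnn hPsum Qi β hQ,
    fun hnode hedge =>
      TreeCrossEntropy.sum_mul_log_div_add_entropy_eq hQpos Qi β hQ hnode fun e he a b => ?_⟩
  simp only [β, hedge e he, hnode]
  rfl
end

section
/- Consider the distribution P on {0,1}³ given by the parameterized table: P(0,0,0)=P(1,1,0)=(1/2−ξ)(1/2−κ), P(0,0,1)=P(1,1,1)=(1/2+ξ)(1/2−κ), P(0,1,0)=P(1,0,1)=(1/3+ξ)κ, P(0,1,1)=P(1,0,0)=(2/3−ξ)κ, with ξ∈(0,1/3), κ∈(0,1/2). Then the mutual information between coordinates 1 and 2 equals I(P_{1,2}) = log 2 + (1−2κ)log(1−2κ) + 2κ·log(2κ), which tends to log 2 as κ → 0. -/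
/-- For the parameterized distribution `P` on `{0,1}³`, the mutual information between
coordinates 1 and 2 equals `log 2 + (1−2κ)log(1−2κ) + 2κ·log(2κ)`, which tends to `log 2`
as `κ → 0⁺`. -/
theorem stmt_17 (ξ κ : ℝ) (hξ : ξ ∈ Set.Ioo (0 : ℝ) (1 / 3))
    (hκ : κ ∈ Set.Ioo (0 : ℝ) (1 / 2)) :
    let P : Bool → Bool → Bool → ℝ := fun x1 x2 x3 =>
      if x1 = x2 then
        (if x3 then (1 / 2 + ξ) * (1 / 2 - κ) else (1 / 2 - ξ) * (1 / 2 - κ))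
      else
        (if x3 = x1 then (1 / 3 + ξ) * κ else (2 / 3 - ξ) * κ);
    let P12 : Bool → Bool → ℝ := fun a b => ∑ c, P a b c;
    let MI : (Bool → Bool → ℝ) → ℝ := fun R =>
      ∑ a, ∑ b, R a b * Real.log (R a b / ((∑ b', R a b') * (∑ a', R a' b)));
    MI P12 = Real.log 2 + (1 - 2 * κ) * Real.log (1 - 2 * κ) + 2 * κ * Real.log (2 * κ) ∧
    Filter.Tendsto
      (fun κ' : ℝ =>
        Real.log 2 + (1 - 2 * κ') * Real.log (1 - 2 * κ') + 2 * κ' * Real.log (2 * κ'))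
      (nhdsWithin 0 (Set.Ioi 0)) (nhds (Real.log 2)) := by
  obtain ⟨hκ0, hκ1⟩ := hκ
  intro P P12 MI
  constructor
  · have h1 : (0:ℝ) < 1 - 2 * κ := by linarith
    have h2 : (0:ℝ) < 2 * κ := by linarith
    simp only [MI, P12, P, Fintype.sum_bool]
    norm_num
    have e1 : (1/2 + ξ) * (1/2 - κ) + (1/2 - ξ) * (1/2 - κ) = (1 - 2*κ)/2 := by ring
    have e2 : (1/3 + ξ) * κ + (2/3 - ξ) * κ = (2*κ)/2 := by ring
    have e2' : (2/3 - ξ) * κ + (1/3 + ξ) * κ = (2*κ)/2 := by ring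
    rw [e1, e2, e2']
    have s1 : (1 - 2*κ)/2 + (2*κ)/2 = (1:ℝ)/2 := by ring
    have s2 : (2*κ)/2 + (1 - 2*κ)/2 = (1:ℝ)/2 := by ring
    rw [s1, s2]
    have l1 : Real.log ((1 - 2*κ)/2 / ((1:ℝ)/2 * ((1:ℝ)/2))) = Real.log 2 + Real.log (1 - 2*κ) := by
      have : (1 - 2*κ)/2 / ((1:ℝ)/2 * ((1:ℝ)/2)) = 2 * (1 - 2*κ) := by ring
      rw [this, Real.log_mul (by norm_num) (ne_of_gt h1)]
    have l2 : Real.log ((2*κ)/2 / ((1:ℝ)/2 * ((1:ℝ)/2))) = Real.log 2 + Real.log (2*κ) := by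
      have : (2*κ)/2 / ((1:ℝ)/2 * ((1:ℝ)/2)) = 2 * (2*κ) := by ring
      rw [this, Real.log_mul (by norm_num) (ne_of_gt h2)]
    rw [l1, l2]; ring
  · have hc : Continuous fun κ' : ℝ =>
        Real.log 2 + (1 - 2 * κ') * Real.log (1 - 2 * κ') + 2 * κ' * Real.log (2 * κ') := by
      have h := Real.continuous_mul_log
      exact (continuous_const.add
        (h.comp (by continuity : Continuous fun κ' : ℝ => 1 - 2 * κ'))).add
        (h.comp (by continuity : Continuous fun κ' : ℝ => 2 * κ'))
    have := hc.tendsto 0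
    simp only [mul_zero, sub_zero, one_mul, Real.log_one, Real.log_zero, zero_mul,
      add_zero] at this
    exact this.mono_left nhdsWithin_le_nhds
end

section
/- For the distribution P of the previous context, the mutual informations satisfy I(P_{2,3}) = I(P_{1,3}) for all (ξ,κ) ∈ (0,1/3)×(0,1/2), and for sufficiently small κ > 0, I(P_{1,2}) > I(P_{2,3}). -/
/-!
Writing `¬` for the flip of a bit, the table satisfies `P(x,x,c) = P(¬x,¬x,c)` and
`P(¬x,x,c) = P(x,¬x,¬c)`, hence `P₂₃(b,c) = P₁₃(¬b,c)`: the two marginals differ by a relabelling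
of the first coordinate, which does not change mutual information.

Mutual information is continuous at every joint distribution whose marginals do not vanish,
because `x log (x / y) = x log x - x log y` for `y ≠ 0`. At `κ = 0` the marginal `P₁₂` is uniform on
the diagonal, with mutual information `log 2`, while `P₂₃` is a product distribution, with mutual
information `0`; so `I(P₁₂) > I(P₂₃)` persists for small `κ > 0`.
-/

open Topology Real

theorem ContinuousAt.mul_log_div {X : Type*} [TopologicalSpace X] {f g : X → ℝ} {x : X}
    (hf : ContinuousAt f x) (hg : ContinuousAt g x) (hx : g x ≠ 0) :
    ContinuousAt (fun y => f y * Real.log (f y / g y)) x := by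
  have hsplit : (fun y => f y * Real.log (f y) - f y * Real.log (g y)) =ᶠ[𝓝 x]
      fun y => f y * Real.log (f y / g y) := by
    filter_upwards [hg.eventually_ne hx] with y hy
    rcases eq_or_ne (f y) 0 with h | h
    · simp [h]
    · rw [Real.log_div h hy, mul_sub]
  exact ((continuous_mul_log.continuousAt.comp hf).sub
    (hf.mul ((Real.continuousAt_log hx).comp hg))).congr hsplit

noncomputable def mutualInfo {α β : Type*} [Fintype α] [Fintype β] (R : α → β → ℝ) : ℝ :=
  ∑ a, ∑ b, R a b * log (R a b / ((∑ b', R a b') * (∑ a', R a' b)))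

section mutualInfo

variable {α α' β : Type*} [Fintype α] [Fintype α'] [Fintype β]

theorem mutualInfo_comp_left (R : α → β → ℝ) (σ : α' ≃ α) :
    mutualInfo (fun a b => R (σ a) b) = mutualInfo R := by
  have hcol (b : β) : ∑ a, R (σ a) b = ∑ a, R a b := Equiv.sum_comp σ (R · b)
  simp only [mutualInfo, hcol]
  exact Equiv.sum_comp σ (fun a => ∑ b, R a b * log (R a b / ((∑ b', R a b') * ∑ a', R a' b)))

theorem mutualInfo_mul_eq_zero (p : α → ℝ) (q : β → ℝ) (hp : ∑ a, p a = 1) (hq : ∑ b, q b = 1) :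
    mutualInfo (fun a b => p a * q b) = 0 := by
  refine Finset.sum_eq_zero fun a _ => Finset.sum_eq_zero fun b _ => ?_
  rw [← Finset.mul_sum, ← Finset.sum_mul, hp, hq, mul_one, one_mul]
  rcases eq_or_ne (p a * q b) 0 with h | h
  · simp [h]
  · simp [div_self h]

theorem continuousAt_mutualInfo {R : α → β → ℝ} (hrow : ∀ a, ∑ b, R a b ≠ 0)
    (hcol : ∀ b, ∑ a, R a b ≠ 0) : ContinuousAt mutualInfo R := by
  refine tendsto_finsetSum _ fun a _ => tendsto_finsetSum _ fun b _ => ?_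
  exact ContinuousAt.mul_log_div (continuous_apply_apply a b).continuousAt (by fun_prop)
    (mul_ne_zero (hrow a) (hcol b))

end mutualInfo

/-- For the parameterized distribution `P` on `{0,1}³`, `I(P_{2,3}) = I(P_{1,3})` for all
`(ξ,κ) ∈ (0,1/3)×(0,1/2)`, and for sufficiently small `κ > 0`, `I(P_{1,2}) > I(P_{2,3})`. -/
theorem stmt_18 (ξ : ℝ) (hξ : ξ ∈ Set.Ioo (0 : ℝ) (1 / 3)) :
    let P : ℝ → Bool → Bool → Bool → ℝ := fun κ x1 x2 x3 =>
      if x1 = x2 then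
        (if x3 then (1 / 2 + ξ) * (1 / 2 - κ) else (1 / 2 - ξ) * (1 / 2 - κ))
      else
        (if x3 = x1 then (1 / 3 + ξ) * κ else (2 / 3 - ξ) * κ);
    let P12 : ℝ → Bool → Bool → ℝ := fun κ a b => ∑ c, P κ a b c;
    let P13 : ℝ → Bool → Bool → ℝ := fun κ a c => ∑ b, P κ a b c;
    let P23 : ℝ → Bool → Bool → ℝ := fun κ b c => ∑ a, P κ a b c;
    let MI : (Bool → Bool → ℝ) → ℝ := fun R =>
      ∑ a, ∑ b, R a b * Real.log (R a b / ((∑ b', R a b') * (∑ a', R a' b)));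
    (∀ κ ∈ Set.Ioo (0 : ℝ) (1 / 2), MI (P23 κ) = MI (P13 κ)) ∧
    (∃ κ0 ∈ Set.Ioc (0 : ℝ) (1 / 2),
      ∀ κ ∈ Set.Ioo (0 : ℝ) κ0, MI (P12 κ) > MI (P23 κ)) := by
  intro P P12 P13 P23 MI
  have hP : Continuous P := by
    refine continuous_pi fun a => continuous_pi fun b => continuous_pi fun c => ?_
    dsimp only [P]
    split_ifs <;> fun_prop
  have hP12 : Continuous P12 := by fun_prop
  have hP23 : Continuous P23 := by fun_prop
  have hP12_zero : P12 0 = fun a b => if a = b then 1 / 2 else 0 := by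
    funext a b; cases a <;> cases b <;> simp [P12, P] <;> ring
  have hP23_zero : P23 0 = fun b c => 1 / 2 * (if c then 1 / 2 + ξ else 1 / 2 - ξ) := by
    funext b c; cases b <;> cases c <;> simp [P23, P] <;> ring
  refine ⟨fun κ _ => ?_, ?_⟩
  · have hswap : P23 κ = fun b c => P13 κ (Equiv.boolNot b) c := by
      funext b c; cases b <;> cases c <;> simp [P13, P23, P] <;> ring
    exact (congrArg mutualInfo hswap).trans (mutualInfo_comp_left (P13 κ) Equiv.boolNot)
  · have hMI12 : mutualInfo (P12 0) = log 2 := by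
      rw [hP12_zero]
      simp [mutualInfo]
    have hMI23 : mutualInfo (P23 0) = 0 := by
      rw [hP23_zero]
      exact mutualInfo_mul_eq_zero _ _ (by norm_num) (by simp; ring)
    have hcont12 : ContinuousAt (fun κ => mutualInfo (P12 κ)) 0 := by
      refine (continuousAt_mutualInfo (R := P12 0) ?_ ?_).comp hP12.continuousAt <;>
        · intro x; rw [hP12_zero]; cases x <;> norm_num
    have hcont23 : ContinuousAt (fun κ => mutualInfo (P23 κ)) 0 := by
      refine (continuousAt_mutualInfo (R := P23 0) ?_ ?_).comp hP23.continuousAt <;>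
        · intro x; rw [hP23_zero]; cases x <;> norm_num <;> grind
    have hev := hcont23.eventually_lt hcont12 (by rw [hMI23, hMI12]; exact log_pos one_lt_two)
    exact (mem_nhdsGT_iff_exists_mem_Ioc_Ioo_subset one_half_pos).mp
      (hev.filter_mono nhdsWithin_le_nhds)
end
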